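/- Let q ∈ R^{n×n} and let q_⊥ = q − q_∥ be the component orthogonal to S. If s is a permutation matrix drawn uniformly at random from the n! permutation matrices, then E[|⟨q_⊥, s⟩|] ≥ (1/n)·max_{ij} |(q_⊥)_{ij}|. -/
import Mathlib


open scoped BigOperators
open Finset

noncomputable section

/-- Frobenius inner product on `n × n` real matrices (as functions). -/
def frob {n : ℕ} (x y : Fin n → Fin n → ℝ) : ℝ := ∑ i, ∑ j, x i j * y i j

/-- Frobenius norm. -/
def fnorm {n : ℕ} (x : Fin n → Fin n → ℝ) : ℝ := Real.sqrt (frob x x)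

/-- The matrix `e^i` whose `i`-th row is all ones and all other entries are zero. -/
def rowMat {n : ℕ} (i : Fin n) : Fin n → Fin n → ℝ := fun a _ => if a = i then 1 else 0

/-- The matrix `ẽ^j` whose `j`-th column is all ones and all other entries are zero. -/
def colMat {n : ℕ} (j : Fin n) : Fin n → Fin n → ℝ := fun _ b => if b = j then 1 else 0

/-- The subspace `S` spanned by the row- and column-indicator matrices. -/
def spanS (n : ℕ) : Submodule ℝ (Fin n → Fin n → ℝ) :=
  Submodule.span ℝ (Set.range (rowMat (n := n)) ∪ Set.range (colMat (n := n)))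

/-- The cone `K = S ∩ ℝ₊^{n×n}`. -/
def coneK (n : ℕ) : Set (Fin n → Fin n → ℝ) :=
  {x | x ∈ spanS n ∧ ∀ i j, 0 ≤ x i j}

/-- `p` is the (Euclidean/Frobenius) projection of `x` onto the set `C`. -/
def IsProjOn {n : ℕ} (C : Set (Fin n → Fin n → ℝ)) (x p : Fin n → Fin n → ℝ) : Prop :=
  p ∈ C ∧ ∀ y ∈ C, fnorm (x - p) ≤ fnorm (x - y)

/-- Doubly stochastic matrix. -/
def DoublyStoch {n : ℕ} (ν : Fin n → Fin n → ℝ) : Prop :=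
  (∀ i j, 0 ≤ ν i j) ∧ (∀ i, ∑ j, ν i j = 1) ∧ (∀ j, ∑ i, ν i j = 1)

/-- The permutation matrix of `σ`. -/
def permMat {n : ℕ} (σ : Equiv.Perm (Fin n)) : Fin n → Fin n → ℝ :=
  fun i j => if σ i = j then 1 else 0

/-- The all-ones matrix. -/
def onesMat (n : ℕ) : Fin n → Fin n → ℝ := fun _ _ => 1

lemma frob_self_nonneg {n : ℕ} (x : Fin n → Fin n → ℝ) : 0 ≤ frob x x :=
  Finset.sum_nonneg fun i _ => Finset.sum_nonneg fun j _ => mul_self_nonneg _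

lemma frob_expand {n : ℕ} (x v : Fin n → Fin n → ℝ) (t : ℝ) :
    frob (x - t • v) (x - t • v) = frob x x - 2*t*frob x v + t^2 * frob v v := by
  simp only [frob, Pi.sub_apply, Pi.smul_apply, smul_eq_mul, Finset.mul_sum]
  rw [← Finset.sum_sub_distrib, ← Finset.sum_add_distrib]
  refine Finset.sum_congr rfl fun i _ => ?_
  rw [← Finset.sum_sub_distrib, ← Finset.sum_add_distrib]
  exact Finset.sum_congr rfl fun j _ => by ring

lemma orth_of_proj {n : ℕ} (q qp : Fin n → Fin n → ℝ)
    (hproj : IsProjOn (spanS n : Set (Fin n → Fin n → ℝ)) q qp) :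
    ∀ v ∈ spanS n, frob (q - qp) v = 0 := by
  intro v hv
  set x := q - qp with hx
  set c := frob x v with hc
  set d := frob v v with hdd
  have hd : 0 ≤ d := frob_self_nonneg v
  have key : ∀ t : ℝ, 0 ≤ -(2*t*c) + t^2*d := by
    intro t
    have hy : qp + t • v ∈ (spanS n : Set _) :=
      Submodule.add_mem _ hproj.1 (Submodule.smul_mem _ _ hv)
    have h2 := hproj.2 _ hy
    have heq : q - (qp + t • v) = x - t • v := by
      funext a b; simp [hx]; ring
    rw [heq] at h2
    simp only [fnorm] at h2
    have h3 : frob x x ≤ frob (x - t • v) (x - t • v) :=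
      (Real.sqrt_le_sqrt_iff (frob_self_nonneg (x - t • v))).mp h2
    rw [frob_expand] at h3
    linarith
  by_contra hcne
  have h := key (c/(d+1))
  have hd1 : (0:ℝ) < d + 1 := by linarith
  have hc2 : 0 < c^2 := by positivity
  rw [div_pow] at h
  have : -(2*(c/(d+1))*c) + c^2/(d+1)^2*d = -(c^2 * (d+2))/(d+1)^2 := by
    field_simp; ring
  rw [this] at h
  have hlt : -(c^2 * (d+2))/(d+1)^2 < 0 :=
    div_neg_of_neg_of_pos (by nlinarith) (by positivity)
  linarith

lemma frob_rowMat {n : ℕ} (x : Fin n → Fin n → ℝ) (i : Fin n) :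
    frob x (rowMat i) = ∑ b, x i b := by
  simp [frob, rowMat, mul_ite, Finset.sum_ite_eq', ← Finset.sum_ite_eq' (univ : Finset (Fin n)) i (fun a => ∑ b, x a b)]

lemma frob_colMat {n : ℕ} (x : Fin n → Fin n → ℝ) (j : Fin n) :
    frob x (colMat j) = ∑ a, x a j := by
  simp [frob, colMat, mul_ite]

lemma frob_permMat {n : ℕ} (x : Fin n → Fin n → ℝ) (σ : Equiv.Perm (Fin n)) :
    frob x (permMat σ) = ∑ a, x a (σ a) := by
  refine Finset.sum_congr rfl fun a _ => ?_
  simp [permMat, mul_ite, eq_comm]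

-- cardinality of one-constraint fiber
lemma card_fiber1 {n : ℕ} (i j : Fin n) :
    n * ((univ : Finset (Equiv.Perm (Fin n))).filter (fun σ => σ i = j)).card
      = Nat.factorial n := by
  have hco : ∀ j' : Fin n,
      ((univ : Finset (Equiv.Perm (Fin n))).filter (fun σ => σ i = j)).card =
      ((univ : Finset (Equiv.Perm (Fin n))).filter (fun σ => σ i = j')).card := by
    intro j'
    apply Finset.card_bij (fun σ _ => Equiv.swap j j' * σ)
    · intro σ hσ
      simp only [mem_filter, mem_univ, true_and] at hσ ⊢
      simp [Equiv.Perm.mul_apply, hσ]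
    · intro σ₁ h₁ σ₂ h₂ h
      exact mul_left_cancel h
    · intro τ hτ
      simp only [mem_filter, mem_univ, true_and] at hτ
      refine ⟨Equiv.swap j j' * τ, ?_, ?_⟩
      · simp [Equiv.Perm.mul_apply, hτ]
      · rw [← mul_assoc, Equiv.swap_mul_self, one_mul]
  have hpart := Finset.card_eq_sum_card_fiberwise
    (f := fun σ : Equiv.Perm (Fin n) => σ i) (s := univ) (t := univ)
    (fun x _ => mem_univ _)
  rw [Finset.card_univ, Fintype.card_perm, Fintype.card_fin] at hpart
  rw [hpart, Finset.sum_congr rfl fun j' _ => (hco j').symm, Finset.sum_const,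
    card_univ, Fintype.card_fin, smul_eq_mul]

lemma fiber2_j_empty {n : ℕ} (i j a : Fin n) (ha : a ≠ i) :
    ((univ : Finset (Equiv.Perm (Fin n))).filter (fun σ => σ i = j ∧ σ a = j)) = ∅ := by
  refine Finset.filter_eq_empty_iff.mpr fun σ _ => ?_
  rintro ⟨h1, h2⟩
  exact ha (σ.injective (h2.trans h1.symm))

lemma card_fiber2 {n : ℕ} (i j a : Fin n) (ha : a ≠ i) (b : Fin n) (hb : b ≠ j) :
    (n - 1) * ((univ : Finset (Equiv.Perm (Fin n))).filter (fun σ => σ i = j ∧ σ a = b)).card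
      = ((univ : Finset (Equiv.Perm (Fin n))).filter (fun σ => σ i = j)).card := by
  classical
  set F := (univ : Finset (Equiv.Perm (Fin n))).filter (fun σ => σ i = j) with hF
  have hco : ∀ b' : Fin n, b' ≠ j →
      ((univ : Finset (Equiv.Perm (Fin n))).filter (fun σ => σ i = j ∧ σ a = b)).card =
      ((univ : Finset (Equiv.Perm (Fin n))).filter (fun σ => σ i = j ∧ σ a = b')).card := by
    intro b' hb'
    apply Finset.card_bij (fun σ _ => Equiv.swap b b' * σ)
    · intro σ hσ
      simp only [mem_filter, mem_univ, true_and] at hσ ⊢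
      obtain ⟨h1, h2⟩ := hσ
      constructor
      · simp [Equiv.Perm.mul_apply, h1, Equiv.swap_apply_of_ne_of_ne hb.symm hb'.symm]
      · simp [Equiv.Perm.mul_apply, h2]
    · intro σ₁ _ σ₂ _ h
      exact mul_left_cancel h
    · intro τ hτ
      simp only [mem_filter, mem_univ, true_and] at hτ
      obtain ⟨h1, h2⟩ := hτ
      refine ⟨Equiv.swap b b' * τ, ?_, ?_⟩
      · simp only [mem_filter, mem_univ, true_and]
        constructor
        · simp [Equiv.Perm.mul_apply, h1, Equiv.swap_apply_of_ne_of_ne hb.symm hb'.symm]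
        · simp [Equiv.Perm.mul_apply, h2]
      · rw [← mul_assoc, Equiv.swap_mul_self, one_mul]
  have hpart := Finset.card_eq_sum_card_fiberwise
    (f := fun σ : Equiv.Perm (Fin n) => σ a) (s := F) (t := univ)
    (fun x _ => mem_univ _)
  have hff : ∀ b' : Fin n, F.filter (fun σ => σ a = b') =
      (univ : Finset (Equiv.Perm (Fin n))).filter (fun σ => σ i = j ∧ σ a = b') := by
    intro b'; rw [hF, Finset.filter_filter]
  rw [hpart]
  rw [Finset.sum_congr rfl (fun b' _ => congrArg Finset.card (hff b'))]
  rw [← Finset.sum_erase_add _ _ (mem_univ j), fiber2_j_empty i j a ha]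
  simp only [Finset.card_empty, add_zero]
  rw [Finset.sum_congr rfl (fun b' hb' => (hco b' (Finset.ne_of_mem_erase hb')).symm)]
  rw [Finset.sum_const, Finset.card_erase_of_mem (mem_univ j), card_univ, Fintype.card_fin,
    smul_eq_mul]

lemma sum_over_fiber {n : ℕ} (hn2 : 2 ≤ n) (x : Fin n → Fin n → ℝ)
    (hr : ∀ a, ∑ b, x a b = 0) (hc : ∀ b, ∑ a, x a b = 0) (i j : Fin n) :
    ∃ c2 : ℕ, ∑ σ ∈ (univ : Finset (Equiv.Perm (Fin n))).filter (fun σ => σ i = j),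
        frob x (permMat σ)
      = ((((univ : Finset (Equiv.Perm (Fin n))).filter (fun σ => σ i = j)).card : ℝ) + c2)
          * x i j := by
  classical
  haveI : Nontrivial (Fin n) := Fintype.one_lt_card_iff_nontrivial.mp (by simp; omega)
  obtain ⟨a0, ha0⟩ := exists_ne i
  obtain ⟨b0, hb0⟩ := exists_ne j
  set F := (univ : Finset (Equiv.Perm (Fin n))).filter (fun σ => σ i = j) with hF
  set G := fun (a b : Fin n) =>
    (univ : Finset (Equiv.Perm (Fin n))).filter (fun σ => σ i = j ∧ σ a = b) with hG
  set c2 := (G a0 b0).card with hc2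
  have hconst : ∀ a, a ≠ i → ∀ b, b ≠ j → (G a b).card = c2 := by
    intro a ha b hb
    have h1 := card_fiber2 i j a ha b hb
    have h2 := card_fiber2 i j a0 ha0 b0 hb0
    exact Nat.eq_of_mul_eq_mul_left (by omega) (h1.trans h2.symm)
  refine ⟨c2, ?_⟩
  -- step 1: swap sums
  have step1 : ∑ σ ∈ F, frob x (permMat σ) = ∑ a, ∑ σ ∈ F, x a (σ a) := by
    rw [Finset.sum_congr rfl fun σ _ => frob_permMat x σ]
    exact Finset.sum_comm
  -- step 2: fiberwise
  have step2 : ∀ a, ∑ σ ∈ F, x a (σ a) = ∑ b, ((G a b).card : ℝ) * x a b := by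
    intro a
    rw [← Finset.sum_fiberwise_of_maps_to (g := fun σ : Equiv.Perm (Fin n) => σ a)
      (t := univ) (fun σ _ => mem_univ _) (fun σ => x a (σ a))]
    refine Finset.sum_congr rfl fun b _ => ?_
    have : F.filter (fun σ => σ a = b) = G a b := by rw [hF, Finset.filter_filter, hG]
    rw [this]
    rw [Finset.sum_congr rfl (fun σ hσ => by
      rw [(Finset.mem_filter.mp hσ).2.2]), Finset.sum_const, nsmul_eq_mul]
  rw [step1, Finset.sum_congr rfl fun a _ => step2 a]
  -- split a = i
  rw [← Finset.sum_erase_add _ _ (mem_univ i)]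
  -- the a = i term
  have hGi : ∀ b, b ≠ j → (G i b) = ∅ := by
    intro b hb
    refine Finset.filter_eq_empty_iff.mpr fun σ _ => ?_
    rintro ⟨h1, h2⟩; exact hb (h2.symm.trans h1)
  have hGij : G i j = F := by
    rw [hG, hF]; apply Finset.filter_congr; intro σ _; simp [and_self]
  have hterm_i : ∑ b, ((G i b).card : ℝ) * x i b = (F.card : ℝ) * x i j := by
    rw [Finset.sum_eq_single j]
    · rw [hGij]
    · intro b _ hb; rw [hGi b hb]; simp
    · intro h; exact absurd (mem_univ j) h
  rw [hterm_i]
  -- the a ≠ i terms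
  have hterm : ∀ a, a ≠ i → ∑ b, ((G a b).card : ℝ) * x a b = -(c2 : ℝ) * x a j := by
    intro a ha
    have hgj : G a j = ∅ := fiber2_j_empty i j a ha
    rw [← Finset.sum_erase_add _ _ (mem_univ j), hgj]
    simp only [Finset.card_empty, Nat.cast_zero, zero_mul, add_zero]
    rw [Finset.sum_congr rfl (fun b hb => by
      rw [hconst a ha b (Finset.ne_of_mem_erase hb)])]
    rw [← Finset.mul_sum, Finset.sum_erase_eq_sub (mem_univ j), hr a]
    ring
  rw [Finset.sum_congr rfl (fun a ha => hterm a (Finset.ne_of_mem_erase ha))]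
  rw [← Finset.mul_sum, Finset.sum_erase_eq_sub (mem_univ i), hc j]
  ring

/-- For a uniformly random permutation matrix `s`,
`E[|⟨q_⊥, s⟩|] ≥ (1/n)·max_{ij} |(q_⊥)_{ij}|`. -/

theorem stmt7 (n : ℕ) (hn : 0 < n) (q qp : Fin n → Fin n → ℝ)
    (hproj : IsProjOn (spanS n : Set (Fin n → Fin n → ℝ)) q qp) :
    (1 / (Nat.factorial n : ℝ)) * ∑ σ : Equiv.Perm (Fin n), |frob (q - qp) (permMat σ)|
      ≥ (1 / (n : ℝ)) *
        Finset.univ.sup' ⟨(⟨0, hn⟩, ⟨0, hn⟩), Finset.mem_univ _⟩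
          (fun p : Fin n × Fin n => |(q - qp) p.1 p.2|) := by
  classical
  set x := q - qp with hx
  have horth := orth_of_proj q qp hproj
  have hr : ∀ a, ∑ b, x a b = 0 := fun a => by
    rw [← frob_rowMat]; exact horth _ (Submodule.subset_span (Or.inl ⟨a, rfl⟩))
  have hcsum : ∀ b, ∑ a, x a b = 0 := fun b => by
    rw [← frob_colMat]; exact horth _ (Submodule.subset_span (Or.inr ⟨b, rfl⟩))
  obtain ⟨p, -, hp⟩ := Finset.exists_mem_eq_sup'
    (⟨(⟨0, hn⟩, ⟨0, hn⟩), Finset.mem_univ _⟩ : (Finset.univ : Finset (Fin n × Fin n)).Nonempty)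
    (fun p : Fin n × Fin n => |x p.1 p.2|)
  rw [hp, ge_iff_le]
  have hsum_nonneg : (0:ℝ) ≤ ∑ σ : Equiv.Perm (Fin n), |frob x (permMat σ)| :=
    Finset.sum_nonneg fun σ _ => abs_nonneg _
  rcases Nat.lt_or_ge n 2 with h1 | h2
  · -- n = 1
    obtain rfl : n = 1 := by omega
    have h0 := hr p.1
    rw [Fin.sum_univ_one] at h0
    have hz : x p.1 p.2 = 0 := by rwa [Subsingleton.elim p.2 0]
    rw [hz, abs_zero, mul_zero]
    positivity
  · set F := (univ : Finset (Equiv.Perm (Fin n))).filter (fun σ => σ p.1 = p.2) with hF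
    obtain ⟨c2, hT⟩ := sum_over_fiber h2 x hr hcsum p.1 p.2
    have hnR : (0:ℝ) < n := by exact_mod_cast hn
    have hfact : (0:ℝ) < (Nat.factorial n : ℝ) := by exact_mod_cast n.factorial_pos
    have hcardF : (n:ℝ) * (F.card : ℝ) = (Nat.factorial n : ℝ) := by
      exact_mod_cast card_fiber1 p.1 p.2
    have s1 : ∑ σ ∈ F, |frob x (permMat σ)|
        ≤ ∑ σ : Equiv.Perm (Fin n), |frob x (permMat σ)| :=
      Finset.sum_le_sum_of_subset_of_nonneg (Finset.filter_subset _ _)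
        (fun _ _ _ => abs_nonneg _)
    have s2 : |∑ σ ∈ F, frob x (permMat σ)| ≤ ∑ σ ∈ F, |frob x (permMat σ)| :=
      Finset.abs_sum_le_sum_abs _ _
    have s3 : |∑ σ ∈ F, frob x (permMat σ)| = ((F.card : ℝ) + c2) * |x p.1 p.2| := by
      rw [hT, abs_mul, abs_of_nonneg (by positivity)]
    have h4 : (F.card : ℝ) * |x p.1 p.2| ≤ ∑ σ ∈ F, |frob x (permMat σ)| := by
      have hc2 : (0:ℝ) ≤ (c2 : ℝ) := Nat.cast_nonneg _
      have hM : (0:ℝ) ≤ |x p.1 p.2| := abs_nonneg _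
      nlinarith [s2, s3]
    have heq : (1 / (Nat.factorial n : ℝ)) * (F.card : ℝ) = 1 / (n:ℝ) := by
      field_simp
      linarith [hcardF]
    have h5 : (1 / (n:ℝ)) * |x p.1 p.2|
        ≤ (1 / (Nat.factorial n : ℝ)) * ∑ σ ∈ F, |frob x (permMat σ)| := by
      rw [← heq, mul_assoc]
      exact mul_le_mul_of_nonneg_left h4 (by positivity)
    exact h5.trans (mul_le_mul_of_nonneg_left s1 (by positivity))
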